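/- arXiv:2402.02552 — 4 statements merged into one kernel-verified Lean document; each statement's English description precedes it below -/
import Mathlib

section
/- Suppose λ > 1 and NN(x) ≥ Φ(x) for some fixed x ∈ X. If y* minimizes the surrogate objective y ↦ f(x,y) + λ·max{0, NN(x) − f(x,y)} over Y, then f(x,y*) = Φ(x), i.e., the surrogate problem selects a lower-level response attaining the optimal follower value. -/
/-- If λ > 1 and the prediction overestimates the follower's value at x
(NN(x) ≥ Φ(x)), then any minimizer of the surrogate objective
y ↦ f(x,y) + λ·max{0, NN(x) − f(x,y)} over Y attains f(x,y*) = Φ(x). -/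
theorem surrogate_overestimate_selects_optimal_response
    {X Y : Type*} [Nonempty X] [Nonempty Y] [Fintype Y]
    (f : X → Y → ℝ) (Φ : X → ℝ)
    (hΦ : ∀ x : X, IsGreatest (Set.range fun y => f x y) (Φ x))
    (NN : X → ℝ) (lam : ℝ) (hlam : 1 < lam)
    (x : X) (hover : Φ x ≤ NN x) (ystar : Y)
    (hmin : ∀ y : Y,
      f x ystar + lam * max 0 (NN x - f x ystar) ≤
        f x y + lam * max 0 (NN x - f x y)) :
    f x ystar = Φ x := by
  have hub : ∀ y : Y, f x y ≤ Φ x := fun y => (hΦ x).2 ⟨y, rfl⟩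
  have hmaxeq : ∀ y : Y, max 0 (NN x - f x y) = NN x - f x y := fun y =>
    max_eq_right (by linarith [hub y])
  obtain ⟨y0, hy0⟩ := (hΦ x).1
  have h := hmin y0
  rw [hmaxeq ystar, hmaxeq y0] at h
  have : f x y0 ≤ f x ystar := by nlinarith
  have := hub ystar
  simp only [] at hy0
  linarith
end

section
/- Suppose λ > 1 and NN(x) < Φ(x) for some fixed x ∈ X. If y* minimizes the surrogate objective y ↦ f(x,y) + λ·max{0, NN(x) − f(x,y)} over Y, then NN(x) − Δ/λ ≤ f(x,y*) ≤ Φ(x), where Δ is the maximum gap between consecutive attainable objective values of f. -/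
/-- If λ > 1 and the prediction underestimates the follower's value at x
(NN(x) < Φ(x)), then any minimizer y* of the surrogate objective satisfies
NN(x) − Δ/λ ≤ f(x,y*) ≤ Φ(x), where Δ bounds the maximal gap between
consecutive attainable values of f. -/
theorem surrogate_underestimate_bounds
    {X Y : Type*} [Nonempty X] [Nonempty Y] [Fintype Y]
    (f : X → Y → ℝ) (Φ : X → ℝ)
    (hΦ : ∀ x : X, IsGreatest (Set.range fun y => f x y) (Φ x))
    (NN : X → ℝ) (lam : ℝ) (hlam : 1 < lam)
    (Δ : ℝ) (hΔ0 : 0 ≤ Δ)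
    (hΔ : ∀ (x : X) (y y' : Y), f x y' < f x y →
      (¬ ∃ ytil : Y, f x y' < f x ytil ∧ f x ytil < f x y) →
      f x y - f x y' ≤ Δ)
    (x : X) (hunder : NN x < Φ x) (ystar : Y)
    (hmin : ∀ y : Y,
      f x ystar + lam * max 0 (NN x - f x ystar) ≤
        f x y + lam * max 0 (NN x - f x y)) :
    NN x - Δ / lam ≤ f x ystar ∧ f x ystar ≤ Φ x := by
  have hlam0 : (0:ℝ) < lam := lt_trans one_pos hlam
  have hub : f x ystar ≤ Φ x := (hΦ x).2 ⟨ystar, rfl⟩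
  refine ⟨?_, hub⟩
  by_cases hcase : NN x ≤ f x ystar
  · have : 0 ≤ Δ / lam := div_nonneg hΔ0 hlam0.le
    linarith
  push_neg at hcase
  -- f x ystar < NN x
  obtain ⟨ymax, hymax⟩ := (hΦ x).1
  have hymaxgt : f x ystar < f x ymax := by simp only [] at hymax; rw [show f x ymax = Φ x from hymax]; linarith
  set S : Finset Y := Finset.univ.filter (fun y => f x ystar < f x y) with hS
  have hSne : ymax ∈ S := by simp [hS, hymaxgt]
  obtain ⟨y₀, hy₀S, hy₀min⟩ := S.exists_min_image (f x) ⟨ymax, hSne⟩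
  have hy₀gt : f x ystar < f x y₀ := by
    have := Finset.mem_filter.mp hy₀S; exact this.2
  have hnob : ¬ ∃ ytil : Y, f x ystar < f x ytil ∧ f x ytil < f x y₀ := by
    rintro ⟨yt, h1, h2⟩
    have : yt ∈ S := by simp [hS, h1]
    exact absurd (hy₀min yt this) (not_le.mpr h2)
  have hgap : f x y₀ - f x ystar ≤ Δ := hΔ x y₀ ystar hy₀gt hnob
  have hmin0 := hmin y₀
  have hmstar : max 0 (NN x - f x ystar) = NN x - f x ystar :=
    max_eq_right (by linarith)
  rw [hmstar] at hmin0
  by_cases hy0 : NN x ≤ f x y₀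
  · have hm0 : max 0 (NN x - f x y₀) = 0 := max_eq_left (by linarith)
    rw [hm0] at hmin0
    have : lam * (NN x - f x ystar) ≤ Δ := by linarith
    have h2 : NN x - f x ystar ≤ Δ / lam := by
      rw [le_div_iff₀ hlam0]; linarith [mul_comm lam (NN x - f x ystar)]
    linarith
  · push_neg at hy0
    have hm0 : max 0 (NN x - f x y₀) = NN x - f x y₀ :=
      max_eq_right (by linarith)
    rw [hm0] at hmin0
    nlinarith [mul_pos (sub_pos.mpr hlam) (sub_pos.mpr hy₀gt)]
end

section
/- There exists an instance of a bilevel problem with a single binary leader variable and single binary follower variable, together with a prediction function NN on {0,1}, such that the upper-level approximation (minimizing NN(x) over feasible x) returns a leader decision x = 1 for which the follower problem max{ y : y ∈ {0,1}, 2x + y ≤ 1 } is infeasible, while the lower-level approximation (the surrogate VFR with slack) returns the bilevel-feasible decision x = 0. Concretely, for the problem min_x y s.t. y ∈ argmax{ y ∈ {0,1} : 2x + y ≤ 1 }, taking NN(0) = 2 and NN(1) = 0 exhibits this behavior. -/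
/-!
The lower-level approximation keeps the follower's constraint `2 x + y ≤ 1`, and with `y ≥ 0`
this alone excludes `x = 1`, whatever the prediction. The upper-level approximation sees only
the prediction `NN x = 2 - 2 x`, which is smallest at `x = 1`.
-/

lemma nonneg_of_mem_zero_one {y : ℝ} (hy : y ∈ ({0, 1} : Set ℝ)) : 0 ≤ y := by
  rcases hy with rfl | rfl <;> norm_num

lemma eq_zero_of_mem_zero_one_of_two_mul_add_le_one {x y : ℝ} (hx : x ∈ ({0, 1} : Set ℝ))
    (hy : 0 ≤ y) (h : 2 * x + y ≤ 1) : x = 0 := by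
  rcases hx with rfl | rfl
  · rfl
  · linarith

/-- Example 1: there is an instance (the problem min_x y s.t.
y ∈ argmax{y ∈ {0,1} : 2x + y ≤ 1}) and a prediction NN with NN(0)=2,
NN(1)=0 such that the upper-level approximation selects x = 1, which makes
the follower infeasible, while the lower-level approximation (surrogate VFR
with slack, penalty λ > 1) only returns the bilevel-feasible x = 0. -/
theorem upper_level_can_be_infeasible_lower_level_not :
    ∃ NN : ℝ → ℝ, NN 0 = 2 ∧ NN 1 = 0 ∧
      -- upper-level approximation: x = 1 minimizes NN over {0,1}
      (∀ x ∈ ({0, 1} : Set ℝ), NN 1 ≤ NN x) ∧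
      -- the follower problem at x = 1 is infeasible
      (¬ ∃ y ∈ ({0, 1} : Set ℝ), 2 * 1 + y ≤ 1) ∧
      -- lower-level approximation: every optimal (x,y,s) has x = 0
      (∀ lam : ℝ, 1 < lam →
        ∀ x y s : ℝ, x ∈ ({0, 1} : Set ℝ) → y ∈ ({0, 1} : Set ℝ) →
          0 ≤ s → 2 * x + y ≤ 1 → NN x - s ≤ y →
          (∀ x' y' s' : ℝ, x' ∈ ({0, 1} : Set ℝ) → y' ∈ ({0, 1} : Set ℝ) →
            0 ≤ s' → 2 * x' + y' ≤ 1 → NN x' - s' ≤ y' →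
            y + lam * s ≤ y' + lam * s') →
          x = 0) := by
  refine ⟨fun x => 2 - 2 * x, by norm_num, by norm_num, ?_, ?_, ?_⟩
  · rintro x (rfl | rfl) <;> norm_num
  · rintro ⟨y, hy, h⟩
    linarith [nonneg_of_mem_zero_one hy]
  · intro _ _ x y _ hx hy _ hcoupling _ _
    exact eq_zero_of_mem_zero_one_of_two_mul_add_le_one hx (nonneg_of_mem_zero_one hy) hcoupling
end

section
/- Let t* minimize g(t) = t + λ·max{0, a − t} over a finite nonempty T ⊆ ℝ with λ > 1, and suppose T contains its maximum m with m ≥ a (prediction a does not exceed the best attainable value). If moreover successive attainable values in T differ by at most Δ (i.e., for any two u < v in T with no element strictly between them, v − u ≤ Δ), then t* ≥ a − Δ/λ. -/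
/-- If t* minimizes g(t) = t + λ·max{0, a − t} over a finite nonempty T
whose maximum m satisfies m ≥ a, λ > 1, and any two consecutive values of T
differ by at most Δ, then t* ≥ a − Δ/λ. -/
theorem penalized_minimizer_lower_bound
    (a lam Δ : ℝ) (hlam : 1 < lam) (hΔ0 : 0 ≤ Δ)
    (T : Finset ℝ) (hT : T.Nonempty)
    (hmax : a ≤ T.max' hT)
    (hgap : ∀ u ∈ T, ∀ v ∈ T, u < v →
      (¬ ∃ w ∈ T, u < w ∧ w < v) → v - u ≤ Δ)
    (tstar : ℝ) (htstar : tstar ∈ T)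
    (hmin : ∀ t ∈ T,
      tstar + lam * max 0 (a - tstar) ≤ t + lam * max 0 (a - t)) :
    a - Δ / lam ≤ tstar := by
  have hlam0 : (0:ℝ) < lam := lt_trans one_pos hlam
  by_cases hta : a ≤ tstar
  · have : 0 ≤ Δ / lam := div_nonneg hΔ0 hlam0.le
    linarith
  push_neg at hta
  -- next element above tstar
  set S := T.filter (fun t => tstar < t) with hS
  have hSne : S.Nonempty := by
    refine ⟨T.max' hT, ?_⟩
    simp only [hS, Finset.mem_filter]
    exact ⟨T.max'_mem hT, lt_of_lt_of_le hta hmax⟩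
  set v := S.min' hSne with hv
  have hvS : v ∈ S := S.min'_mem hSne
  have hvT : v ∈ T := (Finset.mem_filter.mp hvS).1
  have htv : tstar < v := (Finset.mem_filter.mp hvS).2
  have hnogap : ¬ ∃ w ∈ T, tstar < w ∧ w < v := by
    rintro ⟨w, hwT, h1, h2⟩
    have : v ≤ w := S.min'_le w (Finset.mem_filter.mpr ⟨hwT, h1⟩)
    linarith
  have hDv : v - tstar ≤ Δ := hgap tstar htstar v hvT htv hnogap
  have hmin' := hmin v hvT
  have hmaxts : max 0 (a - tstar) = a - tstar := max_eq_right (by linarith)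
  by_cases hva : a ≤ v
  · have hmv : max 0 (a - v) = 0 := max_eq_left (by linarith)
    rw [hmaxts, hmv] at hmin'
    -- tstar + lam * (a - tstar) ≤ v ≤ tstar + Δ
    have h1 : lam * (a - tstar) ≤ Δ := by linarith
    have h2 : a - tstar ≤ Δ / lam := by
      rw [le_div_iff₀ hlam0]; linarith [h1]
    linarith
  · push_neg at hva
    have hmv : max 0 (a - v) = a - v := max_eq_right (by linarith)
    rw [hmaxts, hmv] at hmin'
    nlinarith
end
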